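/- (Theorem 3, part iii) Let γ ∈ (0,1) and consider sequences x_k ∈ ℝ^{np}, y_k ∈ ℝ^{nm} satisfying, for every k ≥ 0, A x_{k+1} = A x_k − γ(A x_k + 𝐋 y_{k+1} − d). If the coupled equality constraint holds at some k₀ ≥ 1, i.e., Σ_{i=1}^n A_i x_{i,k₀} = Σ_{i=1}^n d_i, then it remains satisfied thereafter: Σ_{i=1}^n A_i x_{i,k} = Σ_{i=1}^n d_i for all k ≥ k₀ (anytime feasibility of Eq-DanyRA). -/

import Mathlib

/-! The Laplacian term has zero block-sum, so one decision update multiplies the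
feasibility gap `∑ᵢ Aᵢ xᵢ − ∑ᵢ dᵢ` by `1 − γ`; a zero gap therefore stays zero. -/

set_option autoImplicit false

open scoped BigOperators

noncomputable section

/-- Block-diagonal action `A x` of the stacked matrix `A = blkdiag(A_1,…,A_n)`. -/
def Amul {n m p : ℕ} (A : Fin n → Matrix (Fin m) (Fin p) ℝ)
    (x : EuclideanSpace ℝ (Fin n × Fin p)) : EuclideanSpace ℝ (Fin n × Fin m) :=
  WithLp.toLp 2 fun q : Fin n × Fin m => ∑ k : Fin p, A q.1 q.2 k * x (q.1, k)

/-- Action of `𝐋 = 𝓛 ⊗ I_m` on a stacked vector `u ∈ ℝ^{nm}`. -/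
def Lmul {n m : ℕ} (L : Matrix (Fin n) (Fin n) ℝ)
    (u : EuclideanSpace ℝ (Fin n × Fin m)) : EuclideanSpace ℝ (Fin n × Fin m) :=
  WithLp.toLp 2 fun q : Fin n × Fin m => ∑ l : Fin n, L q.1 l * u (l, q.2)

theorem sum_Lmul_apply_eq_zero {n m : ℕ} {L : Matrix (Fin n) (Fin n) ℝ}
    (hLcol : ∀ j, ∑ i, L i j = 0) (u : EuclideanSpace ℝ (Fin n × Fin m)) (j : Fin m) :
    ∑ i, Lmul L u (i, j) = 0 := by
  simp only [Lmul, PiLp.toLp_apply]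
  rw [Finset.sum_comm]
  simp [← Finset.sum_mul, hLcol]

theorem blockSum_sub_eq_of_update {ι κ : Type*} [Fintype ι]
    {a a' l d : EuclideanSpace ℝ (ι × κ)} {γ : ℝ}
    (hupdate : a' = a - γ • (a + l - d)) (j : κ) (hl : ∑ i, l (i, j) = 0) :
    ∑ i, a' (i, j) - ∑ i, d (i, j) = (1 - γ) * (∑ i, a (i, j) - ∑ i, d (i, j)) := by
  subst hupdate
  simp only [PiLp.sub_apply, PiLp.add_apply, PiLp.smul_apply, smul_eq_mul, Finset.sum_sub_distrib,
    ← Finset.mul_sum, Finset.sum_add_distrib, hl]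
  ring

theorem stmt_19_general {n m p : ℕ}
    (A : Fin n → Matrix (Fin m) (Fin p) ℝ)
    (d : EuclideanSpace ℝ (Fin n × Fin m))
    (L : Matrix (Fin n) (Fin n) ℝ)
    (hLcol : ∀ j, ∑ i, L i j = 0)
    (γ : ℝ)
    (x : ℕ → EuclideanSpace ℝ (Fin n × Fin p))
    (y : ℕ → EuclideanSpace ℝ (Fin n × Fin m))
    (hrec : ∀ k : ℕ, Amul A (x (k + 1)) =
      Amul A (x k) - γ • (Amul A (x k) + Lmul L (y (k + 1)) - d))
    (k₀ : ℕ)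
    (hfeas : ∀ j : Fin m,
      (∑ i : Fin n, Amul A (x k₀) (i, j)) = ∑ i : Fin n, d (i, j)) :
    ∀ k : ℕ, k₀ ≤ k → ∀ j : Fin m,
      (∑ i : Fin n, Amul A (x k) (i, j)) = ∑ i : Fin n, d (i, j) := by
  intro k hk
  induction k, hk using Nat.le_induction with
  | base => exact hfeas
  | succ k _ ih =>
    intro j
    have hgap := blockSum_sub_eq_of_update (hrec k) j
      (sum_Lmul_apply_eq_zero hLcol (y (k + 1)) j)
    rw [sub_eq_zero.mpr (ih j), mul_zero] at hgap
    exact sub_eq_zero.mp hgap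

/-- Theorem 3, part iii: under the Eq-DanyRA decision-update
constraint `A x_{k+1} = A x_k − γ(A x_k + 𝐋 y_{k+1} − d)` with `γ ∈ (0,1)`, if
the coupled equality constraint `∑ᵢ Aᵢ x_{i,k₀} = ∑ᵢ dᵢ` holds at some
`k₀ ≥ 1`, then it remains satisfied thereafter:
`∑ᵢ Aᵢ x_{i,k} = ∑ᵢ dᵢ` for all `k ≥ k₀` (anytime feasibility). -/
theorem stmt_19 {n m p : ℕ} (hn : 1 ≤ n)
    (A : Fin n → Matrix (Fin m) (Fin p) ℝ)
    (d : EuclideanSpace ℝ (Fin n × Fin m))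
    (L : Matrix (Fin n) (Fin n) ℝ)
    (hLsym : L.IsSymm)
    (hLrow : ∀ i, ∑ j, L i j = 0)
    (hLcol : ∀ j, ∑ i, L i j = 0)
    (γ : ℝ) (hγ0 : 0 < γ) (hγ1 : γ < 1)
    (x : ℕ → EuclideanSpace ℝ (Fin n × Fin p))
    (y : ℕ → EuclideanSpace ℝ (Fin n × Fin m))
    (hrec : ∀ k : ℕ, Amul A (x (k + 1)) =
      Amul A (x k) - γ • (Amul A (x k) + Lmul L (y (k + 1)) - d))
    (k₀ : ℕ) (hk₀ : 1 ≤ k₀)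
    (hfeas : ∀ j : Fin m,
      (∑ i : Fin n, Amul A (x k₀) (i, j)) = ∑ i : Fin n, d (i, j)) :
    ∀ k : ℕ, k₀ ≤ k → ∀ j : Fin m,
      (∑ i : Fin n, Amul A (x k) (i, j)) = ∑ i : Fin n, d (i, j) :=
  stmt_19_general A d L hLcol γ x y hrec k₀ hfeas
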